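/- Let m ≥ 2 be an integer, δ ∈ ℝ, c > 0 with c ≠ m^{-1/2}, and σ_1, …, σ_{m+1} ≥ 0 not all zero. Let ψ_1, …, ψ_{m+1} be independent real random variables with ψ_j ~ N(0, σ_j²) for each j. Then P[ (ψ_{m+1} − ψ̄_m + δ)² = c² S_m² ] = 0, where ψ̄_m and S_m² are the sample mean and sample variance of ψ_1, …, ψ_m. -/

import Mathlib

/-!
Choose a coordinate `k` with `σ k ≠ 0`. By independence the law of `ψ` is the product of its
Gaussian marginals, and `N(0, σ_k²)` has no atoms, so by Fubini it suffices that for each fixed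
value of the other coordinates the event holds for only finitely many values of `ψ_k`. As a
function of `ψ_k`, `(ψ_{m+1} − ψ̄_m + δ)² − c² S_m²` is a quadratic polynomial whose leading
coefficient is `1` if `k = m + 1` and `1/m² − c²/m` otherwise; the latter vanishes only for
`c = m^{-1/2}`.
-/

open MeasureTheory ProbabilityTheory

/-- Sample mean of `y_1, …, y_m`. -/
noncomputable def sMean {m : ℕ} (y : Fin m → ℝ) : ℝ := (∑ j, y j) / (m : ℝ)

/-- Sample variance of `y_1, …, y_m`. -/
noncomputable def sVar {m : ℕ} (y : Fin m → ℝ) : ℝ :=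
  (∑ j, (y j - sMean y) ^ 2) / ((m : ℝ) - 1)

theorem Fintype.sum_update {ι M : Type*} [Fintype ι] [DecidableEq ι] [AddCommGroup M]
    (f : ι → M) (i : ι) (b : M) : ∑ j, Function.update f i b j = ∑ j, f j - f i + b := by
  rw [Finset.sum_update_of_mem (Finset.mem_univ i), Finset.sdiff_singleton_eq_erase,
    ← Finset.add_sum_erase _ f (Finset.mem_univ i)]
  abel

theorem MeasureTheory.Measure.pi_apply_eq_zero_of_countable_update {n : ℕ}
    {α : Fin (n + 1) → Type*}
    [∀ i, MeasurableSpace (α i)] {μ : ∀ i, Measure (α i)} [∀ i, SigmaFinite (μ i)]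
    (i : Fin (n + 1)) [NullSingletonClass (μ i)] {A : Set (∀ j, α j)} (hA : MeasurableSet A)
    (hsec : ∀ y, {x | Function.update y i x ∈ A}.Countable) : Measure.pi μ A = 0 := by
  have he := (measurePreserving_piFinSuccAbove μ i).symm
  rw [← he.measure_preimage hA.nullMeasurableSet, Measure.prod_apply_symm (he.measurable hA)]
  refine lintegral_eq_zero_of_ae_eq_zero (Filter.Eventually.of_forall fun y => ?_)
  refine Set.Countable.measure_zero ?_ _
  rcases isEmpty_or_nonempty (α i) with _ | ⟨⟨x₀⟩⟩
  · exact Set.to_countable _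
  · convert hsec (Fin.insertNth i x₀ y) using 1
    ext x
    simp [Fin.insertNthEquiv, Fin.update_insertNth]

@[fun_prop]
theorem measurable_sMean {m : ℕ} : Measurable (sMean : (Fin m → ℝ) → ℝ) := by
  unfold sMean; fun_prop

@[fun_prop]
theorem measurable_sVar {m : ℕ} : Measurable (sVar : (Fin m → ℝ) → ℝ) := by
  unfold sVar; fun_prop

theorem finite_setOf_sq_affine_eq_quadratic {α β a b d : ℝ} (h : α ^ 2 ≠ a) :
    {x : ℝ | (α * x + β) ^ 2 = a * x ^ 2 + b * x + d}.Finite := by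
  have ha : α ^ 2 - a ≠ 0 := sub_ne_zero.2 h
  open Polynomial in
  have hp : C (α ^ 2 - a) * X ^ 2 + C (2 * α * β - b) * X + C (β ^ 2 - d) ≠ 0 :=
    leadingCoeff_ne_zero.1 (by rwa [leadingCoeff_quadratic ha])
  refine (Polynomial.finite_setOfPred_isRoot hp).subset fun x hx => ?_
  simp only [Set.mem_ofPred_eq, Polynomial.IsRoot, Polynomial.eval_add, Polynomial.eval_mul,
    Polynomial.eval_pow, Polynomial.eval_C, Polynomial.eval_X] at hx ⊢
  linear_combination hx

theorem sMean_update {m : ℕ} (y : Fin m → ℝ) (i : Fin m) (x : ℝ) :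
    sMean (Function.update y i x) = sMean y + (x - y i) / m := by
  rw [sMean, sMean, Fintype.sum_update]
  ring

theorem sum_sq_sub_sMean {m : ℕ} (hm : (m : ℝ) ≠ 0) (y : Fin m → ℝ) :
    ∑ j, (y j - sMean y) ^ 2 = ∑ j, y j ^ 2 - (∑ j, y j) ^ 2 / m := by
  have hsum : ∑ j, y j = m * sMean y := by rw [sMean]; field_simp
  simp only [sub_sq, Finset.sum_add_distrib, Finset.sum_sub_distrib, ← Finset.sum_mul,
    ← Finset.mul_sum, Finset.sum_const, Finset.card_univ, Fintype.card_fin, nsmul_eq_mul, hsum]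
  field_simp
  ring

theorem exists_sVar_update_eq {m : ℕ} (hm : 1 < m) (y : Fin m → ℝ) (i : Fin m) :
    ∃ b d : ℝ, ∀ x, sVar (Function.update y i x) = 1 / m * x ^ 2 + b * x + d := by
  have hm₀ : (m : ℝ) ≠ 0 := by positivity
  have hm₁ : (m : ℝ) - 1 ≠ 0 := sub_ne_zero.2 (by exact_mod_cast hm.ne')
  set S := ∑ j, y j - y i
  set V := ∑ j, y j ^ 2 - y i ^ 2
  refine ⟨-2 * S / (m * (m - 1)), (V - S ^ 2 / m) / (m - 1), fun x => ?_⟩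
  have hsq : (fun j => Function.update y i x j ^ 2) =
      Function.update (fun j => y j ^ 2) i (x ^ 2) :=
    Function.comp_update (· ^ 2) y i x
  rw [sVar, sum_sq_sub_sMean hm₀, Fintype.sum_update, hsq, Fintype.sum_update]
  field_simp
  ring

theorem finite_setOf_update_sq_eq_sVar {m : ℕ} (hm : 1 < m) {δ c : ℝ} (hc : 0 < c)
    (hc' : c ≠ (Real.sqrt m)⁻¹) (y : Fin (m + 1) → ℝ) (k : Fin (m + 1)) :
    {x | (Function.update y k x (Fin.last m)
        - sMean (fun j : Fin m => Function.update y k x j.castSucc) + δ) ^ 2 =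
      c ^ 2 * sVar (fun j : Fin m => Function.update y k x j.castSucc)}.Finite := by
  induction k using Fin.lastCases with
  | last =>
    have hrest (x : ℝ) : (fun j : Fin m => Function.update y (Fin.last m) x j.castSucc) =
        fun j => y j.castSucc :=
      Function.update_comp_eq_of_forall_ne' y x Fin.castSucc_ne_last
    simp only [hrest, Function.update_self]
    convert finite_setOf_sq_affine_eq_quadratic (α := 1) (a := 0) (b := 0)
      (β := δ - sMean (fun j : Fin m => y j.castSucc))
      (d := c ^ 2 * sVar (fun j : Fin m => y j.castSucc)) (by norm_num) using 4 with x <;> ring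
  | cast i =>
    obtain ⟨b, d, hvar⟩ := exists_sVar_update_eq hm (fun j => y j.castSucc) i
    have hrest (x : ℝ) : (fun j : Fin m => Function.update y i.castSucc x j.castSucc) =
        Function.update (fun j => y j.castSucc) i x :=
      Function.update_comp_eq_of_injective' y (Fin.castSucc_injective m) i x
    have hlast (x : ℝ) : Function.update y i.castSucc x (Fin.last m) = y (Fin.last m) :=
      Function.update_of_ne (Fin.castSucc_lt_last i).ne' _ _
    have hlead : (-1 / m : ℝ) ^ 2 ≠ c ^ 2 * (1 / m) := by
      intro h
      apply hc'
      rw [← Real.sqrt_inv, eq_comm, Real.sqrt_eq_iff_mul_self_eq_of_pos hc]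
      field_simp at h ⊢
      linarith
    simp only [hrest, hlast, sMean_update, hvar]
    convert finite_setOf_sq_affine_eq_quadratic (b := c ^ 2 * b) (d := c ^ 2 * d)
      (β := y (Fin.last m) - sMean (fun j : Fin m => y j.castSucc) + y i.castSucc / m + δ)
      hlead using 4 with x <;> ring

theorem stmt19_general (m : ℕ) (hm : 2 ≤ m) (δ : ℝ) (c : ℝ) (hc : 0 < c)
    (hc' : c ≠ (Real.sqrt m)⁻¹)
    (σ : Fin (m + 1) → ℝ) (hσne : ∃ j, σ j ≠ 0)
    {Ω : Type} [MeasurableSpace Ω] (P : Measure Ω) [IsProbabilityMeasure P]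
    (ψ : Fin (m + 1) → Ω → ℝ)
    (hindep : iIndepFun ψ P)
    (hdist : ∀ j, P.map (ψ j) = gaussianReal 0 ⟨σ j ^ 2, sq_nonneg _⟩) :
    P {ω | (ψ (Fin.last m) ω - sMean (fun j : Fin m => ψ j.castSucc ω) + δ) ^ 2 =
        c ^ 2 * sVar (fun j : Fin m => ψ j.castSucc ω)} = 0 := by
  obtain ⟨k, hk⟩ := hσne
  -- instance search does not see through the anonymous constructor `⟨σ j ^ 2, _⟩`
  let v : Fin (m + 1) → NNReal := fun j => ⟨σ j ^ 2, sq_nonneg _⟩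
  replace hdist : ∀ j, P.map (ψ j) = gaussianReal 0 (v j) := hdist
  have hψ (j : Fin (m + 1)) : AEMeasurable (ψ j) P :=
    .of_map_ne_zero (hdist j ▸ IsProbabilityMeasure.ne_zero _)
  have hlaw : P.map (fun ω j => ψ j ω) = Measure.pi fun j => gaussianReal 0 (v j) := by
    rw [hindep.map_fun_eq_pi_map hψ]
    simp_rw [hdist]
  have : NullSingletonClass (gaussianReal 0 (v k)) :=
    nullSingletonClass_gaussianReal (fun h => pow_ne_zero 2 hk (congrArg NNReal.toReal h))
  have hB : MeasurableSet {y : Fin (m + 1) → ℝ | (y (Fin.last m)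
      - sMean (fun j : Fin m => y j.castSucc) + δ) ^ 2 =
        c ^ 2 * sVar (fun j : Fin m => y j.castSucc)} :=
    measurableSet_eq_fun (by fun_prop) (by fun_prop)
  have hpre := Measure.map_apply_of_aemeasurable (aemeasurable_pi_lambda _ hψ) hB
  rw [hlaw] at hpre
  exact hpre.symm.trans <| Measure.pi_apply_eq_zero_of_countable_update k hB fun y =>
    (finite_setOf_update_sq_eq_sVar hm hc hc' y k).countable

/-- Lemma S13 of the paper: the distribution of `(ψ_{m+1} − ψ̄_m + δ)² − c² S_m²`
has no point mass at zero. -/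
theorem stmt19 (m : ℕ) (hm : 2 ≤ m) (δ : ℝ) (c : ℝ) (hc : 0 < c)
    (hc' : c ≠ (Real.sqrt m)⁻¹)
    (σ : Fin (m + 1) → ℝ) (hσ : ∀ j, 0 ≤ σ j) (hσne : ∃ j, σ j ≠ 0)
    {Ω : Type} [MeasurableSpace Ω] (P : Measure Ω) [IsProbabilityMeasure P]
    (ψ : Fin (m + 1) → Ω → ℝ)
    (hindep : iIndepFun ψ P)
    (hdist : ∀ j, P.map (ψ j) = gaussianReal 0 ⟨σ j ^ 2, sq_nonneg _⟩) :
    P {ω | (ψ (Fin.last m) ω - sMean (fun j : Fin m => ψ j.castSucc ω) + δ) ^ 2 =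
        c ^ 2 * sVar (fun j : Fin m => ψ j.castSucc ω)} = 0 :=
  stmt19_general m hm δ c hc hc' σ hσne P ψ hindep hdist
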